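/- arXiv:1903.06180 — 3 statements merged into one kernel-verified Lean document; each statement's English description precedes it below -/
import Mathlib

section
/- If E is a completely positive map (represented by a positive semidefinite Choi matrix) and W is positive semidefinite, then the link product D * E := Tr_O[(E ⊗ 1)(1 ⊗ D^{T_O})] of two positive semidefinite operators D and E is positive semidefinite. -/
/-!
Entrywise, `D * E` is obtained from the Kronecker product `E ⊗ D` on `(I × O) × (O × F)` by
restricting to the indices `((i, o), (o, f))` where the two `O`-labels agree, and then summing
the resulting `O × O` array of `(I × F)`-blocks. Both operations are compressions `Bᴴ M B`, so
they preserve positive semidefiniteness, as does the Kronecker product.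
-/

open Matrix ComplexOrder

variable {I O F : Type*} [Fintype I] [Fintype O] [Fintype F]

/-- The link product `D * E := Tr_O[(E ⊗ 1_F)(1_I ⊗ D^{T_O})]`, written out in
components: `(D * E)((i,f),(i',f')) = ∑_{o,o'} E((i,o),(i',o')) · D((o,f),(o',f'))`. -/
noncomputable def linkProd (D : Matrix (O × F) (O × F) ℂ)
    (E : Matrix (I × O) (I × O) ℂ) : Matrix (I × F) (I × F) ℂ :=
  fun p q => ∑ o : O, ∑ o' : O, E (p.1, o) (q.1, o') * D (o, p.2) (o', q.2)

open scoped Kronecker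

theorem Matrix.PosSemidef.sum_blocks {n m R : Type*} [Fintype n] [Fintype m] [DecidableEq n]
    [Ring R] [PartialOrder R] [StarRing R] {S : Matrix (n × m) (n × m) R}
    (hS : S.PosSemidef) : (of fun p q => ∑ o, ∑ o', S (p, o) (q, o')).PosSemidef := by
  convert hS.conjTranspose_mul_mul_same ((1 : Matrix n n R).submatrix Prod.fst id) using 1
  ext p q
  simp only [of_apply, mul_apply, Fintype.sum_prod_type, submatrix_apply, conjTranspose_apply,
    one_apply, id]
  simp only [apply_ite star, star_one, star_zero, ite_mul, mul_ite, one_mul, zero_mul, mul_one,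
    mul_zero, Finset.sum_ite_irrel, Finset.sum_const_zero, Finset.sum_ite_eq', Finset.mem_univ,
    if_true]
  exact Finset.sum_comm

/-- The link product of two positive semidefinite operators is positive semidefinite. -/
theorem linkProd_posSemidef (D : Matrix (O × F) (O × F) ℂ)
    (E : Matrix (I × O) (I × O) ℂ) (hD : D.PosSemidef) (hE : E.PosSemidef) :
    (linkProd D E).PosSemidef := by
  classical
  let glue : (I × F) × O → (I × O) × (O × F) := fun x => ((x.1.1, x.2), (x.2, x.1.2))
  have link_eq : linkProd D E =
      of fun p q => ∑ o, ∑ o', (E ⊗ₖ D).submatrix glue glue (p, o) (q, o') := rfl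
  rw [link_eq]
  exact ((hE.kronecker hD).submatrix glue).sum_blocks
end

section
/- The link product is compatible with composition of maps in the Choi representation: if E is the Choi matrix of a linear map ℰ: B(H_I) → B(H_O) and D is the Choi matrix of 𝒟: B(H_O) → B(H_F), then D * E is the Choi matrix of the composition 𝒟 ∘ ℰ. -/
open Matrix

variable {I O F : Type*} [Fintype I] [Fintype O] [Fintype F]
  [DecidableEq I] [DecidableEq O] [DecidableEq F]

/-- The Choi matrix of a linear map `ℰ : B(H_I) → B(H_O)`:
`E = (I ⊗ ℰ)(|1⟩⟩⟨⟨1|)`, i.e. `E((i,o),(i',o')) = ℰ(|i⟩⟨i'|)(o,o')`. -/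
noncomputable def choi (ℰ : Matrix I I ℂ →ₗ[ℂ] Matrix O O ℂ) :
    Matrix (I × O) (I × O) ℂ :=
  fun p q => ℰ (Matrix.single p.1 q.1 1) p.2 q.2

theorem LinearMap.apply_eq_sum_smul_single {R M m n : Type*} [Semiring R]
    [AddCommMonoid M] [Module R M] [Fintype m] [Fintype n] [DecidableEq m] [DecidableEq n]
    (f : Matrix m n R →ₗ[R] M) (X : Matrix m n R) :
    f X = ∑ i, ∑ j, X i j • f (Matrix.single i j 1) := by
  conv_lhs => rw [matrix_eq_sum_single X]
  simp only [map_sum, ← map_smul, smul_single, smul_eq_mul, mul_one]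

/-- The link product realizes composition of maps in the Choi representation:
if `E` is the Choi matrix of `ℰ : B(H_I) → B(H_O)` and `D` that of
`𝒟 : B(H_O) → B(H_F)`, then `D * E` is the Choi matrix of `𝒟 ∘ ℰ`. -/
theorem linkProd_choi_comp (ℰ : Matrix I I ℂ →ₗ[ℂ] Matrix O O ℂ)
    (𝒟 : Matrix O O ℂ →ₗ[ℂ] Matrix F F ℂ) :
    linkProd (choi 𝒟) (choi ℰ) = choi (𝒟 ∘ₗ ℰ) := by
  funext p q
  simp only [linkProd, choi, LinearMap.comp_apply]
  rw [𝒟.apply_eq_sum_smul_single (ℰ (single p.1 q.1 1))]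
  simp only [Matrix.sum_apply, Matrix.smul_apply, smul_eq_mul]
end

section
/- Applying the filtering Kraus operator M_0 = √x |0⟩⟨0| + √y |1⟩⟨1|, with x = min(p1 q / (p0 (1−q)), 1) and y = min(p0 q / (p1 (1−q)), 1) where q = max(p0',p1') and 1−q = min(p0',p1'), to the state √p0 |0⟩ + √p1 |1⟩ yields, after normalization, a state of the form √p0'' |0⟩ + √p1'' |1⟩ where {p0'', p1''} = {p0', p1'} as a multiset; the success probability (squared norm of the unnormalized output) equals min(p0,p1)/min(p0',p1'). -/
/-!
If `p₀ ≤ p₁` and `q = max(q₀, q₁)`, then `q ≥ 1/2` forces `x = 1`, while `q ≤ p₁` forces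
`y = p₀ q / (p₁ (1 - q)) ≤ 1`. The filtered weights are therefore `p₀` and `p₀ q / (1 - q)`,
whose sum is `p₀ / (1 - q)`, and normalizing gives `1 - q` and `q`. The case `p₁ ≤ p₀` is
the same with the two basis vectors exchanged.
-/

/-- `x = filterWeight p₀ p₁ q` and `y = filterWeight p₁ p₀ q`. -/
noncomputable def filterWeight (a b q : ℝ) : ℝ := min (b * q / (a * (1 - q))) 1

noncomputable def filterSuccessProb (a b q : ℝ) : ℝ :=
  filterWeight a b q * a + filterWeight b a q * b

lemma filterSuccessProb_comm (a b q : ℝ) : filterSuccessProb b a q = filterSuccessProb a b q :=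
  add_comm _ _

lemma Multiset.pair_min_max {α : Type*} [LinearOrder α] (a b : α) :
    ({min a b, max a b} : Multiset α) = {a, b} := by
  rcases le_total a b with h | h
  · rw [min_eq_left h, max_eq_right h]
  · rw [min_eq_right h, max_eq_left h, Multiset.pair_comm]

section

variable {a b q : ℝ}

lemma filterWeight_eq_one (ha : 0 < a) (hab : a ≤ b) (hq : 0 < 1 - q) (hq_half : 1 - q ≤ q) :
    filterWeight a b q = 1 :=
  min_eq_right <| (one_le_div (by positivity)).2 <|
    mul_le_mul hab hq_half hq.le (ha.le.trans hab)

lemma filterWeight_eq_div (hb : 0 < b) (hq : 0 < 1 - q) (hqb : a * q ≤ b * (1 - q)) :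
    filterWeight b a q = a * q / (b * (1 - q)) :=
  min_eq_left <| (div_le_one (by positivity)).2 hqb

lemma filterSuccessProb_eq_of_le (ha : 0 < a) (hab : a ≤ b) (hq : 0 < 1 - q)
    (hq_half : 1 - q ≤ q) (hqb : a * q ≤ b * (1 - q)) :
    filterSuccessProb a b q = a / (1 - q) := by
  have hb : 0 < b := ha.trans_le hab
  rw [filterSuccessProb, filterWeight_eq_one ha hab hq hq_half, filterWeight_eq_div hb hq hqb]
  field_simp
  ring

lemma filtered_state_eq_of_le (ha : 0 < a) (hab : a ≤ b) (hq : 0 < 1 - q)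
    (hq_half : 1 - q ≤ q) (hqb : a * q ≤ b * (1 - q)) :
    ({filterWeight a b q * a / filterSuccessProb a b q,
      filterWeight b a q * b / filterSuccessProb a b q} : Multiset ℝ) = {1 - q, q} := by
  have hb : 0 < b := ha.trans_le hab
  rw [filterSuccessProb_eq_of_le ha hab hq hq_half hqb, filterWeight_eq_one ha hab hq hq_half,
    filterWeight_eq_div hb hq hqb]
  congr 2 <;> field_simp

lemma filtering_of_le (ha : 0 < a) (hab : a ≤ b) (hsum : a + b = 1) (hq : 0 < 1 - q)
    (hq_half : 1 - q ≤ q) (hqb : q ≤ b) :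
    filterSuccessProb a b q = a / (1 - q) ∧
      ({filterWeight a b q * a / filterSuccessProb a b q,
        filterWeight b a q * b / filterSuccessProb a b q} : Multiset ℝ) = {1 - q, q} := by
  have hqb' : a * q ≤ b * (1 - q) := by nlinarith
  exact ⟨filterSuccessProb_eq_of_le ha hab hq hq_half hqb',
    filtered_state_eq_of_le ha hab hq hq_half hqb'⟩

end

/-- Local filtering on the control qubit: applying
`M₀ = √x |0⟩⟨0| + √y |1⟩⟨1|`, with `x = min(p1·q/(p0·(1−q)), 1)` and
`y = min(p0·q/(p1·(1−q)), 1)` where `q = max(p0', p1')`, to the state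
`√p0 |0⟩ + √p1 |1⟩` yields the unnormalized vector `(√(x·p0), √(y·p1))`.
Its squared norm (the success probability) is `s = x·p0 + y·p1 = min(p0,p1)/min(p0',p1')`,
and the normalized output is `√p0'' |0⟩ + √p1'' |1⟩` with `{p0'', p1''} = {p0', p1'}`
as a multiset, i.e. `{x·p0/s, y·p1/s} = {p0', p1'}`. -/
theorem filtering_success_probability (p0 p1 q0 q1 : ℝ)
    (hp0 : 0 < p0) (hp1 : 0 < p1) (hq0 : 0 < q0) (hq1 : 0 < q1)
    (hpsum : p0 + p1 = 1) (hqsum : q0 + q1 = 1)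
    (hmaj : max q0 q1 ≤ max p0 p1) :
    let q : ℝ := max q0 q1
    let x : ℝ := min (p1 * q / (p0 * (1 - q))) 1
    let y : ℝ := min (p0 * q / (p1 * (1 - q))) 1
    let s : ℝ := x * p0 + y * p1
    s = min p0 p1 / min q0 q1 ∧
      ({x * p0 / s, y * p1 / s} : Multiset ℝ) = ({q0, q1} : Multiset ℝ) := by
  intro q x y s
  have hmin : min q0 q1 = 1 - q := by linarith [min_add_max q0 q1]
  have hq : 0 < 1 - q := hmin ▸ lt_min hq0 hq1
  have hq_half : 1 - q ≤ q := hmin ▸ min_le_max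
  change filterSuccessProb p0 p1 q = _ ∧
    ({filterWeight p0 p1 q * p0 / filterSuccessProb p0 p1 q,
      filterWeight p1 p0 q * p1 / filterSuccessProb p0 p1 q} : Multiset ℝ) = _
  rw [hmin, ← Multiset.pair_min_max q0 q1, hmin]
  rcases le_total p0 p1 with h | h
  · rw [min_eq_left h]
    exact filtering_of_le hp0 h hpsum hq hq_half (max_eq_right h ▸ hmaj)
  · rw [min_eq_right h, Multiset.pair_comm, ← filterSuccessProb_comm]
    exact filtering_of_le hp1 h (by linarith) hq hq_half (max_eq_left h ▸ hmaj)
end
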